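/- For n with 2·2^m < n ≤ 3·2^m and m ≥ 1, the complexity of the Thue–Morse sequence satisfies p(n) = 4n − 2·2^m − 4, and for 3·2^m < n ≤ 4·2^m with m ≥ 1, p(n) = 2n + 4·2^m − 2. -/

import Mathlib

open Fin.NatCast in
/-- The Thue–Morse sequence: parity of the number of 1s in binary (fixed point of
`0 ↦ 01`, `1 ↦ 10` starting from `0`). -/
def tm (n : ℕ) : Fin 2 := ((Nat.digits 2 n).count 1 : Fin 2)

/-- The set of length-`n` factors of the Thue–Morse sequence. -/
def tmFactors (n : ℕ) : Set (Fin n → Fin 2) :=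
  {u | ∃ i : ℕ, ∀ j : Fin n, tm (i + j) = u j}

/-- The complexity function of the Thue–Morse sequence. -/
noncomputable def tmComplexity (n : ℕ) : ℕ := (tmFactors n).ncard

/-! The factors of length `N ≥ 4` occurring at even positions are exactly the images under
`0 ↦ 01, 1 ↦ 10` of factors of length `⌈N/2⌉`, those at odd positions the images of factors of
length `⌊N/2⌋ + 1` with the first letter dropped, and no factor occurs at positions of both
parities: in `t(2a) t(2a+1) t(2a+2) t(2a+3)` the letters in positions 0, 1 and 2, 3 differ,
which at an odd position `2b+1` would force `t(b) = t(b+1) = t(b+2)`. Hence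
`p(N) = p(⌈N/2⌉) + p(⌊N/2⌋ + 1)`, so an affine formula `p(n) = c n + d` on `(a, b+1]`
propagates to `p(n) = c n + 2d + c` on `(2a, 2b+1]`. Both formulas of the theorem hold on
their range extended by one to the right; induction on `m` from `p(3) = 6`, `p(4) = 10`,
`p(5) = 12` concludes. -/
section

open Fin.NatCast

theorem tm_eq_div_two_add_mod_two (n : ℕ) : tm n = tm (n / 2) + (n % 2 : ℕ) := by
  rcases Nat.eq_zero_or_pos n with rfl | hn
  · rfl
  · rw [tm, tm, Nat.digits_def' (by norm_num) hn, List.count_cons]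
    rcases Nat.mod_two_eq_zero_or_one n with h | h <;> simp [h]

theorem tm_two_mul (k : ℕ) : tm (2 * k) = tm k := by
  simpa using tm_eq_div_two_add_mod_two (2 * k)

theorem tm_two_mul_add_one (k : ℕ) : tm (2 * k + 1) = tm k + 1 := by
  simpa [Nat.mul_add_div, Nat.mul_add_mod] using tm_eq_div_two_add_mod_two (2 * k + 1)

end

theorem tm_two_mul_add_one_ne (k : ℕ) : tm (2 * k + 1) ≠ tm (2 * k) := by
  rw [tm_two_mul_add_one, tm_two_mul]
  omega

theorem tm_ne_succ_or_succ_ne_succ_succ (k : ℕ) : tm k ≠ tm (k + 1) ∨ tm (k + 1) ≠ tm (k + 2) := by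
  obtain ⟨c, rfl | rfl⟩ := Nat.even_or_odd' k
  · exact .inl (tm_two_mul_add_one_ne c).symm
  · exact .inr (by simpa [mul_add, add_assoc] using (tm_two_mul_add_one_ne (c + 1)).symm)

theorem tm_eq_succ_of_two_mul_add_one_ne {k : ℕ} (h : tm (2 * k + 1) ≠ tm (2 * k + 2)) :
    tm k = tm (k + 1) := by
  rw [tm_two_mul_add_one, show 2 * k + 2 = 2 * (k + 1) by ring, tm_two_mul] at h
  omega

def tmWindow (n i : ℕ) : Fin n → Fin 2 := fun j => tm (i + j)

theorem tmFactors_eq_range (n : ℕ) : tmFactors n = Set.range (tmWindow n) := by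
  ext u
  simp [tmFactors, tmWindow, funext_iff]

theorem tmWindow_two_mul_ne {N : ℕ} (hN : 4 ≤ N) (a b : ℕ) :
    tmWindow N (2 * a) ≠ tmWindow N (2 * b + 1) := by
  intro h
  have hw (j : ℕ) (hj : j < 4) : tm (2 * a + j) = tm (2 * b + 1 + j) :=
    congrFun h ⟨j, by omega⟩
  have h01 : tm (2 * b + 1) ≠ tm (2 * b + 2) := by
    simpa [← hw 0, ← hw 1] using (tm_two_mul_add_one_ne a).symm
  have h23 : tm (2 * (b + 1) + 1) ≠ tm (2 * (b + 1) + 2) := by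
    simpa [← hw 2, ← hw 3, mul_add, add_assoc] using (tm_two_mul_add_one_ne (a + 1)).symm
  have := tm_ne_succ_or_succ_ne_succ_succ b
  have := tm_eq_succ_of_two_mul_add_one_ne h01
  have := tm_eq_succ_of_two_mul_add_one_ne h23
  tauto

section

open Fin.NatCast

/-- The letters `s, …, s + N - 1` of the image of `v` under `0 ↦ 01, 1 ↦ 10`. -/
def tmMorphSlice (s N : ℕ) {n : ℕ} (h : N + s ≤ 2 * n) (v : Fin n → Fin 2) : Fin N → Fin 2 :=
  fun j => v ⟨(s + j) / 2, by omega⟩ + ((s + j) % 2 : ℕ)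

theorem tmMorphSlice_tmWindow {s N n : ℕ} (h : N + s ≤ 2 * n) (k : ℕ) :
    tmMorphSlice s N h (tmWindow n k) = tmWindow N (2 * k + s) := by
  funext j
  rw [tmWindow, tm_eq_div_two_add_mod_two, show (2 * k + s + j) / 2 = k + (s + j) / 2 by omega,
    show (2 * k + s + j) % 2 = (s + j) % 2 by omega]
  rfl

end

theorem tmMorphSlice_injective {s N n : ℕ} (hs : s < 2) (hN : 0 < N) (h : N + s ≤ 2 * n)
    (h' : 2 * n ≤ N + s + 1) : Function.Injective (tmMorphSlice s N h) := by
  intro v w hvw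
  funext j
  simpa only [tmMorphSlice, show (s + (2 * j - s)) / 2 = j by omega, add_left_inj] using
    congrFun hvw ⟨2 * j - s, by omega⟩

theorem image_tmMorphSlice {s N n : ℕ} (h : N + s ≤ 2 * n) :
    tmMorphSlice s N h '' tmFactors n = Set.range fun k => tmWindow N (2 * k + s) := by
  rw [tmFactors_eq_range, ← Set.range_comp]
  simp_rw [Function.comp_def, tmMorphSlice_tmWindow]

theorem tmFactors_eq_union {N n₀ n₁ : ℕ} (h₀ : N ≤ 2 * n₀) (h₁ : N + 1 ≤ 2 * n₁) :
    tmFactors N = tmMorphSlice 0 N h₀ '' tmFactors n₀ ∪ tmMorphSlice 1 N h₁ '' tmFactors n₁ := by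
  rw [image_tmMorphSlice, image_tmMorphSlice, tmFactors_eq_range]
  ext u
  constructor
  · rintro ⟨i, rfl⟩
    obtain ⟨k, rfl | rfl⟩ := Nat.even_or_odd' i
    exacts [.inl ⟨k, rfl⟩, .inr ⟨k, rfl⟩]
  · rintro (⟨k, rfl⟩ | ⟨k, rfl⟩) <;> exact ⟨_, rfl⟩

theorem tmComplexity_eq_add {N : ℕ} (hN : 4 ≤ N) :
    tmComplexity N = tmComplexity ((N + 1) / 2) + tmComplexity (N / 2 + 1) := by
  have h₀ : N ≤ 2 * ((N + 1) / 2) := by omega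
  have h₁ : N + 1 ≤ 2 * (N / 2 + 1) := by omega
  have hdisj : Disjoint (tmMorphSlice 0 N h₀ '' tmFactors ((N + 1) / 2))
      (tmMorphSlice 1 N h₁ '' tmFactors (N / 2 + 1)) := by
    rw [image_tmMorphSlice, image_tmMorphSlice]
    exact Set.disjoint_range_iff.2 fun a b => tmWindow_two_mul_ne hN a b
  rw [tmComplexity, tmFactors_eq_union h₀ h₁,
    Set.ncard_union_eq hdisj (Set.toFinite _) (Set.toFinite _),
    Set.ncard_image_of_injective _ (tmMorphSlice_injective (by omega) (by omega) h₀ (by omega)),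
    Set.ncard_image_of_injective _ (tmMorphSlice_injective (by omega) (by omega) h₁ (by omega))]
  rfl

theorem tmFactors_two : tmFactors 2 = Set.univ := by
  have hcover : ∀ u : Fin 2 → Fin 2, ∃ i ∈ Finset.range 6, tmWindow 2 i = u := by decide
  rw [tmFactors_eq_range, Set.eq_univ_iff_forall]
  intro u
  obtain ⟨i, -, hi⟩ := hcover u
  exact ⟨i, hi⟩

theorem tmFactors_three : tmFactors 3 = {u | ¬(u 0 = u 1 ∧ u 1 = u 2)} := by
  have hcover : ∀ u : Fin 3 → Fin 2, ¬(u 0 = u 1 ∧ u 1 = u 2) →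
      ∃ i ∈ Finset.range 6, tmWindow 3 i = u := by decide
  rw [tmFactors_eq_range]
  ext u
  constructor
  · rintro ⟨i, rfl⟩
    simpa [tmWindow, add_assoc, imp_iff_not_or] using tm_ne_succ_or_succ_ne_succ_succ i
  · intro hu
    obtain ⟨i, -, hi⟩ := hcover u hu
    exact ⟨i, hi⟩

theorem tmComplexity_two : tmComplexity 2 = 4 := by
  simp [tmComplexity, tmFactors_two]

theorem tmComplexity_three : tmComplexity 3 = 6 := by
  rw [tmComplexity, tmFactors_three, Set.ncard_eq_toFinset_card']
  decide

theorem tmComplexity_four : tmComplexity 4 = 10 := by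
  rw [tmComplexity_eq_add le_rfl, tmComplexity_two, tmComplexity_three]

theorem tmComplexity_five : tmComplexity 5 = 12 := by
  rw [tmComplexity_eq_add (by norm_num), tmComplexity_three]

theorem tmComplexity_eq_affine_of_double {a b : ℕ} {c d : ℤ} (ha : 2 ≤ a)
    (h : ∀ n, a < n → n ≤ b + 1 → (tmComplexity n : ℤ) = c * n + d)
    {n : ℕ} (h₁ : 2 * a < n) (h₂ : n ≤ 2 * b + 1) :
    (tmComplexity n : ℤ) = c * n + (2 * d + c) := by
  have hsum : (((n + 1) / 2 : ℕ) : ℤ) + ((n / 2 + 1 : ℕ) : ℤ) = n + 1 := by omega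
  rw [tmComplexity_eq_add (by omega), Nat.cast_add, h _ (by omega) (by omega),
    h _ (by omega) (by omega)]
  linear_combination c * hsum

theorem tmComplexity_eq_of_two_mul_pow_lt (m : ℕ) {n : ℕ} (h₁ : 2 * 2 ^ m < n)
    (h₂ : n ≤ 3 * 2 ^ m + 1) : (tmComplexity n : ℤ) = 4 * n - (2 * 2 ^ m + 4) := by
  induction m generalizing n with
  | zero =>
    interval_cases n
    · simp [tmComplexity_three]
    · simp [tmComplexity_four]
  | succ m ih =>
    rw [pow_succ] at h₁ h₂ ⊢
    rw [tmComplexity_eq_affine_of_double (by have := m.one_le_two_pow; omega)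
      (fun n h₁ h₂ => (ih h₁ h₂).trans (sub_eq_add_neg _ _)) (by linarith) (by linarith)]
    ring

theorem tmComplexity_eq_of_three_mul_pow_lt (m : ℕ) {n : ℕ} (h₁ : 3 * 2 ^ m < n)
    (h₂ : n ≤ 4 * 2 ^ m + 1) : (tmComplexity n : ℤ) = 2 * n + (4 * 2 ^ m - 2) := by
  induction m generalizing n with
  | zero =>
    interval_cases n
    · simp [tmComplexity_four]
    · simp [tmComplexity_five]
  | succ m ih =>
    rw [pow_succ] at h₁ h₂ ⊢
    rw [tmComplexity_eq_affine_of_double (by have := m.one_le_two_pow; omega) (fun _ => ih)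
      (by linarith) (by linarith)]
    ring

theorem tm_complexity_formula_general (m : ℕ) :
    (∀ n : ℕ, 2 * 2 ^ m < n → n ≤ 3 * 2 ^ m →
      tmComplexity n = 4 * n - 2 * 2 ^ m - 4) ∧
    (∀ n : ℕ, 3 * 2 ^ m < n → n ≤ 4 * 2 ^ m →
      tmComplexity n = 2 * n + 4 * 2 ^ m - 2) := by
  have hpow : ((2 ^ m : ℕ) : ℤ) = 2 ^ m := by norm_num
  refine ⟨fun n h₁ h₂ => ?_, fun n h₁ h₂ => ?_⟩
  · have := tmComplexity_eq_of_two_mul_pow_lt m h₁ (by omega)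
    omega
  · have := tmComplexity_eq_of_three_mul_pow_lt m h₁ (by omega)
    omega

/-- The Thue–Morse complexity function: for `m ≥ 1`,
`p(n) = 4n − 2·2^m − 4` when `2·2^m < n ≤ 3·2^m`, and
`p(n) = 2n + 4·2^m − 2` when `3·2^m < n ≤ 4·2^m`. -/
theorem tm_complexity_formula (m : ℕ) (hm : 1 ≤ m) :
    (∀ n : ℕ, 2 * 2 ^ m < n → n ≤ 3 * 2 ^ m →
      tmComplexity n = 4 * n - 2 * 2 ^ m - 4) ∧
    (∀ n : ℕ, 3 * 2 ^ m < n → n ≤ 4 * 2 ^ m →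
      tmComplexity n = 2 * n + 4 * 2 ^ m - 2) :=
  tm_complexity_formula_general m
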